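/- Let p ≥ 5 be an integer and let L_n be the level words of the white metallic tree. Then for every n ∈ ℕ the number of nodes on level n equals m n, i.e. the length of L_n equals m n; in particular the level counts satisfy |L_{n+2}| = (p−2)·|L_{n+1}| − |L_n| with |L_0| = 1 and |L_1| = p−2. -/
import Mathlib


/-- The white metallic sequence: `m 0 = 1`, `m 1 = p - 2`,
`m (n+2) = (p-2) * m (n+1) - m n`. -/
def mseq (p : ℕ) : ℕ → ℤ
  | 0 => 1
  | 1 => (p : ℤ) - 2
  | n + 2 => ((p : ℤ) - 2) * mseq p (n + 1) - mseq p n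

/-- The black metallic sequence: `b 0 = 1`, `b 1 = p - 3`,
`b (n+2) = (p-2) * b (n+1) - b n`. -/
def bseq (p : ℕ) : ℕ → ℤ
  | 0 => 1
  | 1 => (p : ℤ) - 3
  | n + 2 => ((p : ℤ) - 2) * bseq p (n + 1) - bseq p n

/-- The two kinds of nodes of a metallic tree. -/
inductive Letter
  | B : Letter
  | W : Letter
deriving DecidableEq

/-- The generating rules: `B → B W^(p-4)` and `W → B W^(p-3)`. -/
def subst (p : ℕ) : Letter → List Letter
  | Letter.B => Letter.B :: List.replicate (p - 4) Letter.W
  | Letter.W => Letter.B :: List.replicate (p - 3) Letter.W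

/-- Level words of the white metallic tree (rooted at a white node). -/
def whiteLevel (p : ℕ) : ℕ → List Letter
  | 0 => [Letter.W]
  | n + 1 => (whiteLevel p n).flatMap (subst p)

/-- Level words of the black metallic tree (rooted at a black node). -/
def blackLevel (p : ℕ) : ℕ → List Letter
  | 0 => [Letter.B]
  | n + 1 => (blackLevel p n).flatMap (subst p)


lemma count_B_flatMap (p : ℕ) (l : List Letter) :
    (l.flatMap (subst p)).count Letter.B = l.length := by
  induction l with
  | nil => simp
  | cons a t ih =>
    rw [List.flatMap_cons, List.count_append, ih]
    cases a <;> simp [subst, List.count_cons, List.count_replicate] <;> omega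

lemma length_flatMap (p : ℕ) (hp : 5 ≤ p) (l : List Letter) :
    ((l.flatMap (subst p)).length : ℤ)
      = ((p : ℤ) - 2) * l.length - l.count Letter.B := by
  induction l with
  | nil => simp
  | cons a t ih =>
    rw [List.flatMap_cons, List.length_append, List.count_cons]
    push_cast [ih]
    cases a <;> simp [subst] <;> push_cast <;>
      [skip; skip] <;>
    · have : (4:ℤ) ≤ p := by exact_mod_cast (by omega : 4 ≤ p)
      rw [Nat.cast_sub (by omega)]
      push_cast
      ring

/-- for every `n`, the number of nodes on level `n` of the white
metallic tree equals `m n`; in particular the level counts satisfy the induction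
equation `|L (n+2)| = (p-2)|L (n+1)| - |L n|` with `|L 0| = 1` and `|L 1| = p - 2`. -/
theorem white_level_length (p : ℕ) (hp : 5 ≤ p) :
    (∀ n : ℕ, ((whiteLevel p n).length : ℤ) = mseq p n) ∧
    (∀ n : ℕ, ((whiteLevel p (n + 2)).length : ℤ) =
      ((p : ℤ) - 2) * ((whiteLevel p (n + 1)).length : ℤ)
        - ((whiteLevel p n).length : ℤ)) ∧
    (whiteLevel p 0).length = 1 ∧
    ((whiteLevel p 1).length : ℤ) = (p : ℤ) - 2 := by
  have key : ∀ n : ℕ, ((whiteLevel p (n + 2)).length : ℤ) =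
      ((p : ℤ) - 2) * ((whiteLevel p (n + 1)).length : ℤ)
        - ((whiteLevel p n).length : ℤ) := by
    intro n
    have h1 : whiteLevel p (n + 2) = (whiteLevel p (n + 1)).flatMap (subst p) := rfl
    have h2 : whiteLevel p (n + 1) = (whiteLevel p n).flatMap (subst p) := rfl
    rw [h1, length_flatMap p hp]
    rw [h2, count_B_flatMap]
  have h0 : (whiteLevel p 0).length = 1 := rfl
  have h1 : ((whiteLevel p 1).length : ℤ) = (p : ℤ) - 2 := by
    simp [whiteLevel, subst, List.length_replicate]
    rw [Nat.cast_sub (by omega)]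
    push_cast; ring
  refine ⟨?_, key, h0, h1⟩
  have main : ∀ n : ℕ, ((whiteLevel p n).length : ℤ) = mseq p n ∧
      ((whiteLevel p (n + 1)).length : ℤ) = mseq p (n + 1) := by
    intro n
    induction n with
    | zero => exact ⟨by simp [h0, mseq], by simpa [mseq] using h1⟩
    | succ k ih =>
      refine ⟨ih.2, ?_⟩
      rw [key k, ih.1, ih.2]
      rfl
  exact fun n => (main n).1
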